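/- arXiv:0805.2015 — 3 statements merged into one kernel-verified Lean document; each statement's English description precedes it below -/
import Mathlib

section
/- Let d ≥ 1, let A be a finite nonempty set, let L > 0, α ∈ (0,1], ρ > 0, and let Q : ℝ^d × A → ℝ satisfy |Q(s,a) − Q(s′,a)| ≤ (L/2)·‖s − s′‖_∞^α for all s, s′ ∈ ℝ^d and all a ∈ A. Let g : ℝ^d → ℝ^d be a map with ‖s − g(s)‖_∞ ≤ ρ for all s (the nearest grid point map), and let h : ℝ^d → A be a selection of maximizing actions, i.e. Q(x, h(x)) ≥ Q(x, a) for all x ∈ ℝ^d and a ∈ A. Then for every s ∈ ℝ^d and every a ∈ A, Q(s, h(g(s))) ≥ Q(s, a) − L·ρ^α. -/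
theorem sub_two_mul_le_of_abs_sub_le_of_forall_le {A : Type*} {u v : A → ℝ} {ε : ℝ}
    (huv : ∀ a, |u a - v a| ≤ ε) {b : A} (hb : ∀ a, v a ≤ v b) (a : A) :
    u a - 2 * ε ≤ u b := by
  have hua := (abs_le.mp (huv a)).2
  have hub := (abs_le.mp (huv b)).1
  linarith [hb a]

theorem stmt_2_general (d : ℕ) (A : Type*)
    (L α ρ : ℝ) (hL : 0 < L) (hα : α ∈ Set.Ioc (0 : ℝ) 1)
    (Q : (Fin d → ℝ) → A → ℝ)
    (hQ : ∀ s s' : Fin d → ℝ, ∀ a : A, |Q s a - Q s' a| ≤ L / 2 * ‖s - s'‖ ^ α)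
    (g : (Fin d → ℝ) → (Fin d → ℝ)) (hg : ∀ s : Fin d → ℝ, ‖s - g s‖ ≤ ρ)
    (h : (Fin d → ℝ) → A) (hh : ∀ x : Fin d → ℝ, ∀ a : A, Q x (h x) ≥ Q x a) :
    ∀ s : Fin d → ℝ, ∀ a : A, Q s (h (g s)) ≥ Q s a - L * ρ ^ α := by
  intro s a
  have hclose : ∀ b, |Q s b - Q (g s) b| ≤ L / 2 * ρ ^ α := fun b =>
    (hQ s (g s) b).trans <| mul_le_mul_of_nonneg_left
      (Real.rpow_le_rpow (norm_nonneg _) (hg s) hα.1.le) (half_pos hL).le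
  have hregret := sub_two_mul_le_of_abs_sub_le_of_forall_le hclose (hh (g s)) a
  linarith

/-- Oracle proposition core: the nearest-neighbour policy built from exact best
actions on a ρ-covering grid suffers regret at most `L·ρ^α`. Sup norm on `Fin d → ℝ`. -/
theorem stmt_2 (d : ℕ) (hd : 1 ≤ d) (A : Type*) [Fintype A] [Nonempty A]
    (L α ρ : ℝ) (hL : 0 < L) (hα : α ∈ Set.Ioc (0 : ℝ) 1) (hρ : 0 < ρ)
    (Q : (Fin d → ℝ) → A → ℝ)
    (hQ : ∀ s s' : Fin d → ℝ, ∀ a : A, |Q s a - Q s' a| ≤ L / 2 * ‖s - s'‖ ^ α)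
    (g : (Fin d → ℝ) → (Fin d → ℝ)) (hg : ∀ s : Fin d → ℝ, ‖s - g s‖ ≤ ρ)
    (h : (Fin d → ℝ) → A) (hh : ∀ x : Fin d → ℝ, ∀ a : A, Q x (h x) ≥ Q x a) :
    ∀ s : Fin d → ℝ, ∀ a : A, Q s (h (g s)) ≥ Q s a - L * ρ ^ α :=
  stmt_2_general d A L α ρ hL hα Q hQ g hg h hh
end

section
/- For k = 1, …, n, let A be a finite nonempty set with distinguished elements a*_k ∈ A, let Z > 0, b ∈ ℝ, δ ∈ (0,1) with 2n|A| > δ, c ≥ 1, and for each k let {X^{(k)}_{a,i} : a ∈ A, 1 ≤ i ≤ c} be real random variables on a common probability space, taking values almost surely in [b, b + Z], such that for each fixed k the family {X^{(k)}_{a,i}} is mutually independent and for each a the variables X^{(k)}_{a,1}, …, X^{(k)}_{a,c} are identically distributed with mean Q_k(a). Suppose that for every k, Q_k(a*_k) ≥ Q_k(a) + Z·√(2·log(2n|A|/δ)/c) for all a ≠ a*_k. Let Q̂_k(a) = (1/c)∑_{i=1}^c X^{(k)}_{a,i}. Then P(∃ k and a ≠ a*_k with Q̂_k(a) ≥ Q̂_k(a*_k))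 ≤ δ. -/
/-!
Fix a state `k` and a suboptimal action `a`. The event that `a` looks at least as good as `a*`
is the event that the centred sum of the `c` samples of `a` minus that of `a*` exceeds `c` times
the gap `Z √(2 log(2n|A|/δ) / c)`. By Hoeffding's lemma each centred sum is sub-Gaussian with
variance proxy `c Z² / 4`, and the two sums are independent, so this probability is at most
`exp (-c · gap² / Z²) = (δ / (2n|A|))²`. A union bound over the `n |A|` pairs `(k, a)` gives `δ / 2`.
-/

open MeasureTheory ProbabilityTheory
open Real

namespace ProbabilityTheory

variable {Ω : Type*} [MeasurableSpace Ω] {P : Measure Ω}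

lemma iIndepFun.indepFun_finsetSum_finsetSum {ι : Type*} {f : ι → Ω → ℝ} (h : iIndepFun f P)
    (hf : ∀ i, Measurable (f i)) {S T : Finset ι} (hST : Disjoint S T) :
    IndepFun (fun ω ↦ ∑ i ∈ S, f i ω) (fun ω ↦ ∑ i ∈ T, f i ω) P := by
  have := (h.indepFun_finset S T hST hf).comp (φ := fun v : S → ℝ ↦ ∑ i, v i)
    (ψ := fun v : T → ℝ ↦ ∑ i, v i) (by fun_prop) (by fun_prop)
  convert this using 1 <;> ext ω <;> simp [Finset.sum_attach S (f · ω), Finset.sum_attach T (f · ω)]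

lemma hasSubgaussianMGF_sum_sub_integral_of_mem_Icc [IsProbabilityMeasure P] {ι : Type*}
    {f : ι → Ω → ℝ} (h : iIndepFun f P) (hf : ∀ i, AEMeasurable (f i) P) {a b : ℝ}
    (hb : ∀ i, ∀ᵐ ω ∂P, f i ω ∈ Set.Icc a b) (S : Finset ι) :
    HasSubgaussianMGF (fun ω ↦ ∑ i ∈ S, f i ω - P[fun ω ↦ ∑ i ∈ S, f i ω])
      (S.card * (‖b - a‖₊ / 2) ^ 2) P := by
  have hcent : iIndepFun (fun i ω ↦ f i ω - ∫ ω, f i ω ∂P) P :=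
    h.comp (fun i (x : ℝ) ↦ x - ∫ ω, f i ω ∂P) fun _ ↦ by fun_prop
  have hsum := HasSubgaussianMGF.sum_of_iIndepFun hcent (s := S)
    fun i _ ↦ hasSubgaussianMGF_of_mem_Icc (hf i) (hb i)
  rw [Finset.sum_const, nsmul_eq_mul] at hsum
  refine hsum.congr (ae_of_all _ fun ω ↦ ?_)
  simp only [integral_finsetSum _ fun i _ ↦ Integrable.of_mem_Icc a b (hf i) (hb i),
    Finset.sum_sub_distrib]

lemma measureReal_sum_le_sum_le_exp [IsProbabilityMeasure P] {κ ι : Type*} [Fintype ι]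
    {X : κ × ι → Ω → ℝ} (h : iIndepFun X P) (hX : ∀ p, Measurable (X p)) {lo Z : ℝ}
    (hb : ∀ p, ∀ᵐ ω ∂P, X p ω ∈ Set.Icc lo (lo + Z)) {Q : κ → ℝ}
    (hQ : ∀ a i, Q a = P[X (a, i)]) {a a' : κ} (hne : a ≠ a') {g : ℝ} (hg : 0 ≤ g)
    (hgap : Q a + g ≤ Q a') :
    P.real {ω | ∑ i, X (a', i) ω ≤ ∑ i, X (a, i) ω} ≤
      exp (-(Fintype.card ι * g ^ 2 / Z ^ 2)) := by
  have hint (p : κ × ι) : Integrable (X p) P := .of_mem_Icc lo (lo + Z) (hX p).aemeasurable (hb p)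
  have hmean (a : κ) : P[fun ω ↦ ∑ i, X (a, i) ω] = Fintype.card ι * Q a := by
    simp [integral_finsetSum _ fun i _ ↦ hint (a, i), ← hQ]
  have hsubG (a : κ) := hasSubgaussianMGF_sum_sub_integral_of_mem_Icc h
    (fun p ↦ (hX p).aemeasurable) hb ({a} ×ˢ Finset.univ)
  simp only [Finset.sum_product, Finset.sum_singleton, Finset.card_product, Finset.card_singleton,
    Finset.card_univ, one_mul, add_sub_cancel_left] at hsubG
  have hindep := h.indepFun_finsetSum_finsetSum hX (S := {a'} ×ˢ Finset.univ)
    (T := {a} ×ˢ Finset.univ) (by simp [Finset.disjoint_left, hne])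
  simp only [Finset.sum_product, Finset.sum_singleton] at hindep
  refine (HasSubgaussianMGF.measureReal_le_le_exp (hsubG a') (hsubG a) hindep ?_).trans ?_
  · rw [hmean, hmean]; gcongr; linarith
  · rw [hmean, hmean]
    push_cast
    set m : ℝ := (Fintype.card ι : ℝ)
    have hexponent : (m * Q a - m * Q a') ^ 2 / (2 * (m * (‖Z‖ / 2) ^ 2 + m * (‖Z‖ / 2) ^ 2)) =
        m * ((Q a' - Q a) ^ 2 / Z ^ 2) := by
      rcases eq_or_ne m 0 with hm | hm
      · simp [hm]
      · rw [Real.norm_eq_abs, div_pow, sq_abs]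
        field_simp
        ring
    rw [neg_div, hexponent, mul_div_assoc]
    gcongr
    linarith

lemma measureReal_sum_le_sum_le_inv_sq [IsProbabilityMeasure P] {κ ι : Type*} [Fintype ι]
    [Nonempty ι] {X : κ × ι → Ω → ℝ} (h : iIndepFun X P) (hX : ∀ p, Measurable (X p))
    {lo Z : ℝ} (hb : ∀ p, ∀ᵐ ω ∂P, X p ω ∈ Set.Icc lo (lo + Z)) {Q : κ → ℝ}
    (hQ : ∀ a i, Q a = P[X (a, i)]) {a a' : κ} (hne : a ≠ a') (hZ : 0 < Z) {r : ℝ} (hr : 1 ≤ r)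
    (hgap : Q a + Z * √(2 * log r / Fintype.card ι) ≤ Q a') :
    P.real {ω | ∑ i, X (a', i) ω ≤ ∑ i, X (a, i) ω} ≤ (r ^ 2)⁻¹ := by
  have hm : (0 : ℝ) < Fintype.card ι := by exact_mod_cast Fintype.card_pos
  have hlog : 0 ≤ log r := log_nonneg hr
  refine (measureReal_sum_le_sum_le_exp h hX hb hQ hne (by positivity) hgap).trans_eq ?_
  rw [mul_pow, sq_sqrt (by positivity), ← exp_log (by positivity : (0 : ℝ) < (r ^ 2)⁻¹),
    log_inv, log_pow]
  congr 1
  field_simp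
  push_cast
  ring

end ProbabilityTheory

lemma MeasureTheory.measureReal_iUnion_le_card_mul {α ι : Type*} [MeasurableSpace α]
    {μ : Measure α} [Fintype ι] {s : ι → Set α} {ε : ℝ} (h : ∀ i, μ.real (s i) ≤ ε) :
    μ.real (⋃ i, s i) ≤ Fintype.card ι * ε :=
  (measureReal_iUnion_fintype_le s).trans ((Finset.sum_le_sum fun i _ ↦ h i).trans_eq (by simp))

theorem stmt_10_general {Ω : Type*} [MeasurableSpace Ω] (P : Measure Ω) [IsProbabilityMeasure P]
    (A : Type*) [Fintype A]
    (n : ℕ) (astar : Fin n → A)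
    (Z : ℝ) (hZ : 0 < Z) (b : ℝ)
    (δ : ℝ) (hδ : δ ∈ Set.Ioo (0 : ℝ) 1)
    (hnA : 2 * (n : ℝ) * (Fintype.card A : ℝ) > δ)
    (c : ℕ) (hc : 1 ≤ c)
    (X : Fin n → A → Fin c → Ω → ℝ) (hmeas : ∀ k a i, Measurable (X k a i))
    (hindep : ∀ k : Fin n,
      iIndepFun (fun p : A × Fin c => X k p.1 p.2) P)
    (hbound : ∀ k a i, ∀ᵐ ω ∂P, X k a i ω ∈ Set.Icc b (b + Z))
    (Q : Fin n → A → ℝ) (hQ : ∀ k a i, Q k a = ∫ ω, X k a i ω ∂P)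
    (hgap : ∀ k : Fin n, ∀ a : A, a ≠ astar k →
      Q k (astar k) ≥ Q k a +
        Z * Real.sqrt (2 * Real.log (2 * n * (Fintype.card A : ℝ) / δ) / c)) :
    P {ω | ∃ k : Fin n, ∃ a : A, a ≠ astar k ∧
        (1 / c : ℝ) * ∑ i, X k a i ω ≥ (1 / c : ℝ) * ∑ i, X k (astar k) i ω} ≤
      ENNReal.ofReal δ := by
  have : Nonempty (Fin c) := ⟨⟨0, hc⟩⟩
  set M : ℝ := 2 * n * Fintype.card A
  have hδ0 : 0 < δ := hδ.1
  have hnA0 : (0 : ℝ) < n * Fintype.card A := by linarith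
  have hr : 1 ≤ M / δ := by rw [le_div_iff₀ hδ0]; linarith
  have hstate (p : Fin n × A) : P.real {ω | p.2 ≠ astar p.1 ∧
      ∑ i, X p.1 (astar p.1) i ω ≤ ∑ i, X p.1 p.2 i ω} ≤ δ / M := by
    obtain ⟨k, a⟩ := p
    by_cases ha : a = astar k
    · simp only [ha, ne_eq, not_true_eq_false, false_and, Set.ofPred_false, measureReal_empty]
      positivity
    calc _ ≤ P.real {ω | ∑ i, X k (astar k) i ω ≤ ∑ i, X k a i ω} :=
          measureReal_mono fun ω ↦ And.right
      _ ≤ ((M / δ) ^ 2)⁻¹ := measureReal_sum_le_sum_le_inv_sq (hindep k)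
          (fun p ↦ hmeas k p.1 p.2) (fun p ↦ hbound k p.1 p.2) (fun a i ↦ hQ k a i) ha hZ hr
          (by simpa using hgap k a ha)
      _ ≤ (M / δ)⁻¹ := inv_anti₀ (by positivity) (le_self_pow₀ hr two_ne_zero)
      _ = δ / M := inv_div M δ
  have hsub : {ω | ∃ k : Fin n, ∃ a : A, a ≠ astar k ∧
      (1 / c : ℝ) * ∑ i, X k a i ω ≥ (1 / c : ℝ) * ∑ i, X k (astar k) i ω} ⊆
      ⋃ p : Fin n × A, {ω | p.2 ≠ astar p.1 ∧ ∑ i, X p.1 (astar p.1) i ω ≤ ∑ i, X p.1 p.2 i ω} := by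
    rintro ω ⟨k, a, ha, hle⟩
    exact Set.mem_iUnion.2 ⟨(k, a), ha, le_of_mul_le_mul_left hle (by positivity)⟩
  have hcount : Fintype.card (Fin n × A) * (δ / M) = δ / 2 := by
    simp only [Fintype.card_prod, Fintype.card_fin, Nat.cast_mul, M]
    field_simp
    exact div_self hnA0.ne'
  rw [← ofReal_measureReal]
  refine ENNReal.ofReal_le_ofReal ((measureReal_mono hsub).trans ?_)
  linarith [measureReal_iUnion_le_card_mul hstate]

/-- Policy-improvement-step guarantee for the Fixed allocation algorithm: under
the acceptance condition at every one of the `n` grid states, the probability that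
the empirically best action differs from the truly best action at any state is at
most `δ`, by a union bound over states. -/
theorem stmt_10 {Ω : Type*} [MeasurableSpace Ω] (P : Measure Ω) [IsProbabilityMeasure P]
    (A : Type*) [Fintype A] [Nonempty A]
    (n : ℕ) (hn : 1 ≤ n) (astar : Fin n → A)
    (Z : ℝ) (hZ : 0 < Z) (b : ℝ)
    (δ : ℝ) (hδ : δ ∈ Set.Ioo (0 : ℝ) 1)
    (hnA : 2 * (n : ℝ) * (Fintype.card A : ℝ) > δ)
    (c : ℕ) (hc : 1 ≤ c)
    (X : Fin n → A → Fin c → Ω → ℝ) (hmeas : ∀ k a i, Measurable (X k a i))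
    (hindep : ∀ k : Fin n,
      iIndepFun (fun p : A × Fin c => X k p.1 p.2) P)
    (hbound : ∀ k a i, ∀ᵐ ω ∂P, X k a i ω ∈ Set.Icc b (b + Z))
    (Q : Fin n → A → ℝ) (hQ : ∀ k a i, Q k a = ∫ ω, X k a i ω ∂P)
    (hgap : ∀ k : Fin n, ∀ a : A, a ≠ astar k →
      Q k (astar k) ≥ Q k a +
        Z * Real.sqrt (2 * Real.log (2 * n * (Fintype.card A : ℝ) / δ) / c)) :
    P {ω | ∃ k : Fin n, ∃ a : A, a ≠ astar k ∧
        (1 / c : ℝ) * ∑ i, X k a i ω ≥ (1 / c : ℝ) * ∑ i, X k (astar k) i ω} ≤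
      ENNReal.ofReal δ :=
  stmt_10_general P A n astar Z hZ b δ hδ hnA c hc X hmeas hindep hbound Q hQ hgap
end

section
/- Let d ≥ 1, let A be a finite nonempty set, let L > 0, α ∈ (0,1], ρ > 0, M > 0, β > 0, and let Q : ℝ^d × A → ℝ satisfy |Q(s,a) − Q(s′,a)| ≤ (L/2)·‖s − s′‖_∞^α for all s, s′ ∈ ℝ^d and a ∈ A. Let h : ℝ^d → A be a selection with Q(x, h(x)) ≥ Q(x, a) for all x and a, and define the gap Δ(s) = Q(s, h(s)) − max_{a ≠ h(s)} Q(s, a) (taking Δ(s) = 0 if |A| = 1). Let g : ℝ^d → ℝ^d satisfy ‖s − g(s)‖_∞ ≤ ρ for all s. If the set {s ∈ [0,1]^d : Δ(s) < L·ρ^α} is Lebesgue measurable with Lebesgue measure at most M·(L·ρ^α)^β, and the set E = {s ∈ [0,1]^d : ∃ a ∈ A with Q(g(s), a) > Q(g(s), h(s))} is Lebesgue measurable, then E ⊆ {s ∈ [0,1]^d : Δ(s) < L·ρ^α} and the Lebesgue measure of E is at most M·(L·ρ^α)^β. -/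
open MeasureTheory

/-! If the best action at `s` beats every other one by at least `L ρ^α`, moving to a point
within distance `ρ` changes each action value by at most `(L/2) ρ^α`, so the best action at `s`
is still optimal there. So `E` lies in the small-gap region, whose measure is bounded. -/

theorem apply_le_apply_of_holder_of_gap {X A : Type*} [SeminormedAddCommGroup X]
    (Q : X → A → ℝ) {K α ρ : ℝ} (hK : 0 ≤ K) (hα : 0 ≤ α)
    (hQ : ∀ s s' : X, ∀ a : A, |Q s a - Q s' a| ≤ K * ‖s - s'‖ ^ α)
    {s s' : X} (hss' : ‖s - s'‖ ≤ ρ) {a b : A} (hgap : 2 * K * ρ ^ α ≤ Q s b - Q s a) :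
    Q s' a ≤ Q s' b := by
  have hmove : ∀ c, |Q s c - Q s' c| ≤ K * ρ ^ α := fun c =>
    (hQ s s' c).trans <| mul_le_mul_of_nonneg_left
      (Real.rpow_le_rpow (norm_nonneg _) hss' hα) hK
  have ha := abs_le.mp (hmove a)
  have hb := abs_le.mp (hmove b)
  linarith [ha.1, hb.2]

theorem stmt_16_general (d : ℕ) (A : Type*) [Fintype A] [DecidableEq A]
    (L α ρ M β : ℝ) (hL : 0 < L) (hα : α ∈ Set.Ioc (0 : ℝ) 1)
    (Q : (Fin d → ℝ) → A → ℝ)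
    (hQ : ∀ s s' : Fin d → ℝ, ∀ a : A, |Q s a - Q s' a| ≤ L / 2 * ‖s - s'‖ ^ α)
    (h : (Fin d → ℝ) → A)
    (Δ : (Fin d → ℝ) → ℝ)
    (hΔ : ∀ s : Fin d → ℝ, ∀ hne : (Finset.univ.erase (h s)).Nonempty,
      Δ s = Q s (h s) - (Finset.univ.erase (h s)).sup' hne (Q s))
    (g : (Fin d → ℝ) → (Fin d → ℝ)) (hg : ∀ s : Fin d → ℝ, ‖s - g s‖ ≤ ρ)
    (hvol : volume {s : Fin d → ℝ | s ∈ Set.Icc (0 : Fin d → ℝ) 1 ∧ Δ s < L * ρ ^ α} ≤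
      ENNReal.ofReal (M * (L * ρ ^ α) ^ β))
    (E : Set (Fin d → ℝ))
    (hE : E = {s : Fin d → ℝ | s ∈ Set.Icc (0 : Fin d → ℝ) 1 ∧
      ∃ a : A, Q (g s) a > Q (g s) (h s)}) :
    E ⊆ {s : Fin d → ℝ | s ∈ Set.Icc (0 : Fin d → ℝ) 1 ∧ Δ s < L * ρ ^ α} ∧
      volume E ≤ ENNReal.ofReal (M * (L * ρ ^ α) ^ β) := by
  have hsub : E ⊆ {s | s ∈ Set.Icc (0 : Fin d → ℝ) 1 ∧ Δ s < L * ρ ^ α} := by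
    rw [hE]
    rintro s ⟨hs, a, ha⟩
    refine ⟨hs, lt_of_not_ge fun hgap => ha.not_ge ?_⟩
    have ha_mem : a ∈ Finset.univ.erase (h s) :=
      Finset.mem_erase.2 ⟨fun hah => (hah ▸ ha).false, Finset.mem_univ a⟩
    have ha_le := Finset.le_sup' (Q s) ha_mem
    rw [hΔ s ⟨a, ha_mem⟩] at hgap
    exact apply_le_apply_of_holder_of_gap Q (by positivity) hα.1.le hQ (hg s) (by linarith)
  exact ⟨hsub, (measure_mono hsub).trans hvol⟩

/-- Oracle algorithm improvement claim: the set `E` of states at whose nearest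
grid point the locally best action `h s` fails to be optimal is contained in the
region where the gap `Δ` is below `L ρ^α`, hence has measure at most `M (L ρ^α)^β`.
Sup norm on `Fin d → ℝ`. -/
theorem stmt_16 (d : ℕ) (hd : 1 ≤ d) (A : Type*) [Fintype A] [Nonempty A] [DecidableEq A]
    (L α ρ M β : ℝ) (hL : 0 < L) (hα : α ∈ Set.Ioc (0 : ℝ) 1) (hρ : 0 < ρ)
    (hM : 0 < M) (hβ : 0 < β)
    (Q : (Fin d → ℝ) → A → ℝ)
    (hQ : ∀ s s' : Fin d → ℝ, ∀ a : A, |Q s a - Q s' a| ≤ L / 2 * ‖s - s'‖ ^ α)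
    (h : (Fin d → ℝ) → A) (hh : ∀ x : Fin d → ℝ, ∀ a : A, Q x (h x) ≥ Q x a)
    (Δ : (Fin d → ℝ) → ℝ)
    (hΔ : ∀ s : Fin d → ℝ, ∀ hne : (Finset.univ.erase (h s)).Nonempty,
      Δ s = Q s (h s) - (Finset.univ.erase (h s)).sup' hne (Q s))
    (hΔ0 : ∀ s : Fin d → ℝ, ¬ (Finset.univ.erase (h s)).Nonempty → Δ s = 0)
    (g : (Fin d → ℝ) → (Fin d → ℝ)) (hg : ∀ s : Fin d → ℝ, ‖s - g s‖ ≤ ρ)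
    (hmeas : MeasurableSet
      {s : Fin d → ℝ | s ∈ Set.Icc (0 : Fin d → ℝ) 1 ∧ Δ s < L * ρ ^ α})
    (hvol : volume {s : Fin d → ℝ | s ∈ Set.Icc (0 : Fin d → ℝ) 1 ∧ Δ s < L * ρ ^ α} ≤
      ENNReal.ofReal (M * (L * ρ ^ α) ^ β))
    (E : Set (Fin d → ℝ))
    (hE : E = {s : Fin d → ℝ | s ∈ Set.Icc (0 : Fin d → ℝ) 1 ∧
      ∃ a : A, Q (g s) a > Q (g s) (h s)})
    (hEmeas : MeasurableSet E) :
    E ⊆ {s : Fin d → ℝ | s ∈ Set.Icc (0 : Fin d → ℝ) 1 ∧ Δ s < L * ρ ^ α} ∧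
      volume E ≤ ENNReal.ofReal (M * (L * ρ ^ α) ^ β) :=
  stmt_16_general d A L α ρ M β hL hα Q hQ h Δ hΔ g hg hvol E hE
end
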